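/- arXiv:2107.03136 — 2 statements merged into one kernel-verified Lean document; each statement's English description precedes it below -/
import Mathlib

section
/- Let ρ, ρ̃ : ℝ → ℝ with sup_{x∈ℝ}|ρ(x) − ρ̃(x)| ≤ δ and ρ̃ Lipschitz with constant C. Let W_ℓ(z) = A_ℓ z + b_ℓ, ℓ = 1,…,L, be affine maps (as in a neural network with coordinatewise activation), and let Φ, Φ̃ denote the networks built with activations ρ and ρ̃ respectively and the same weights. Then for all z, |Φ(z) − Φ̃(z)| ≤ δ · √(max_ℓ n_ℓ) · ‖A_L‖·(1 + C‖A_{L-1}‖ + C²‖A_{L-1}‖‖A_{L-2}‖ + ⋯ + C^{L-2}‖A_{L-1}‖⋯‖A_2‖). In particular, if ρ_ε → ρ uniformly on ℝ, then Φ^{(ε)}(z) → Φ(z) uniformly in z ∈ ℝ² and uniformly over weights in any bounded set of the weight space. -/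
/-!
Write `σ` and `σ̃` for the coordinatewise activations. At each hidden layer the error splits as
`σ x - σ̃ y = (σ x - σ̃ x) + (σ̃ x - σ̃ y)`: the first term has every coordinate at most `δ`, so
Euclidean norm at most `δ √n`, and the second is at most `C ‖x - y‖` because `σ̃` inherits the
Lipschitz constant of `ρ̃`. Applying `A_ℓ` gives `e_{ℓ+1} ≤ ‖A_ℓ‖ (δ √n + C e_ℓ)` with `e_1 = 0`,
and unrolling this recursion produces the stated geometric-type sum.
-/

open scoped NNReal
open Finset

namespace EuclideanSpace

variable {ι : Type*} [Fintype ι]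

theorem norm_le_mul_sqrt_card_of_abs_le {v : EuclideanSpace ℝ ι} {δ : ℝ} (h : ∀ i, |v i| ≤ δ) :
    ‖v‖ ≤ δ * √(Fintype.card ι) := by
  rcases isEmpty_or_nonempty ι with _ | ⟨⟨i₀⟩⟩
  · simp [Subsingleton.elim v 0]
  have hδ : 0 ≤ δ := (abs_nonneg _).trans (h i₀)
  calc ‖v‖ = √(∑ i, |v i| ^ 2) := by simp [EuclideanSpace.norm_eq]
    _ ≤ √(∑ _i : ι, δ ^ 2) := by gcongr with i; exact h i
    _ = δ * √(Fintype.card ι) := by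
      rw [sum_const, card_univ, nsmul_eq_mul, Real.sqrt_mul (by positivity), Real.sqrt_sq hδ,
        mul_comm]

theorem lipschitzWith_toLp_comp_apply {f : ℝ → ℝ} {C : ℝ≥0} (hf : LipschitzWith C f) :
    LipschitzWith C fun x : EuclideanSpace ℝ ι => WithLp.toLp 2 fun i => f (x i) := by
  refine LipschitzWith.of_dist_le_mul fun x y => ?_
  simp only [EuclideanSpace.dist_eq]
  calc √(∑ i, dist (f (x i)) (f (y i)) ^ 2) ≤ √(∑ i, (C * dist (x i) (y i)) ^ 2) := by
        gcongr with i; exact hf.dist_le_mul _ _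
    _ = C * √(∑ i, dist (x i) (y i) ^ 2) := by
        simp_rw [mul_pow, ← mul_sum]
        rw [Real.sqrt_mul (by positivity), Real.sqrt_sq C.coe_nonneg]

theorem norm_toLp_comp_sub_toLp_comp_le {ρ ρt : ℝ → ℝ} {δ : ℝ} {C : ℝ≥0}
    (hclose : ∀ x, |ρ x - ρt x| ≤ δ) (hLip : LipschitzWith C ρt) (x y : EuclideanSpace ℝ ι) :
    ‖(WithLp.toLp 2 fun i => ρ (x i)) - WithLp.toLp 2 fun i => ρt (y i)‖ ≤
      δ * √(Fintype.card ι) + C * ‖x - y‖ := by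
  set w : EuclideanSpace ℝ ι := WithLp.toLp 2 fun i => ρt (x i)
  have hρ : ‖(WithLp.toLp 2 fun i => ρ (x i)) - w‖ ≤ δ * √(Fintype.card ι) :=
    norm_le_mul_sqrt_card_of_abs_le fun i => by simpa [w] using hclose (x i)
  have hρt : ‖w - WithLp.toLp 2 fun i => ρt (y i)‖ ≤ C * ‖x - y‖ := by
    simpa only [← dist_eq_norm] using (lipschitzWith_toLp_comp_apply hLip).dist_le_mul x y
  exact (norm_sub_le_norm_sub_add_norm_sub _ w _).trans (add_le_add hρ hρt)

end EuclideanSpace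

/-- `errorGain K a ℓ = 1 + K a_{ℓ-2} + K² a_{ℓ-2} a_{ℓ-3} + ⋯ + K^{ℓ-2} a_{ℓ-2} ⋯ a_1`. -/
def errorGain (K : ℝ) (a : ℕ → ℝ) (ℓ : ℕ) : ℝ :=
  ∑ j ∈ range (ℓ - 1), K ^ j * ∏ i ∈ range j, a (ℓ - 2 - i)

theorem errorGain_add_two (K : ℝ) (a : ℕ → ℝ) (m : ℕ) :
    errorGain K a (m + 2) = 1 + K * a m * errorGain K a (m + 1) := by
  rw [errorGain, errorGain, show m + 2 - 1 = m + 1 by omega, sum_range_succ', mul_sum, add_comm]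
  congr 1
  · simp
  refine sum_congr rfl fun j _ => ?_
  have hidx : ∀ i, m - (i + 1) = m + 1 - 2 - i := fun i => by omega
  simp only [prod_range_succ', hidx, pow_succ, Nat.add_sub_cancel, Nat.sub_zero]
  ring

theorem le_mul_errorGain_of_le_mul_add {e a : ℕ → ℝ} {c K : ℝ} {N : ℕ} (hK : 0 ≤ K)
    (ha : ∀ ℓ, 0 ≤ a ℓ) (h₁ : e 1 ≤ 0)
    (hstep : ∀ ℓ, 1 ≤ ℓ → ℓ < N → e (ℓ + 1) ≤ a ℓ * (c + K * e ℓ)) :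
    ∀ ℓ, 1 ≤ ℓ → ℓ ≤ N → e ℓ ≤ c * a (ℓ - 1) * errorGain K a ℓ := by
  intro ℓ hℓ
  induction ℓ, hℓ using Nat.le_induction with
  | base => simpa [errorGain] using fun _ => h₁
  | succ ℓ hℓ ih =>
    intro hN
    obtain ⟨m, rfl⟩ : ∃ m, ℓ = m + 1 := ⟨ℓ - 1, by omega⟩
    calc e (m + 1 + 1) ≤ a (m + 1) * (c + K * e (m + 1)) := hstep _ hℓ hN
      _ ≤ a (m + 1) * (c + K * (c * a m * errorGain K a (m + 1))) := by
        gcongr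
        · exact ha _
        · exact ih (by omega)
      _ = c * a (m + 1) * errorGain K a (m + 2) := by
        rw [errorGain_add_two]; ring

theorem stmt8_general {C : ℝ≥0} (ρ ρt : ℝ → ℝ) {δ : ℝ}
    (hclose : ∀ x, |ρ x - ρt x| ≤ δ) (hLip : LipschitzWith C ρt)
    (L : ℕ) (hL : 2 ≤ L) (n : ℕ → ℕ)
    (A : ∀ ℓ : ℕ, EuclideanSpace ℝ (Fin (n ℓ)) →L[ℝ] EuclideanSpace ℝ (Fin (n (ℓ+1))))
    (b : ∀ ℓ : ℕ, EuclideanSpace ℝ (Fin (n (ℓ+1))))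
    (Φ Φt : ∀ ℓ : ℕ, EuclideanSpace ℝ (Fin (n 0)) → EuclideanSpace ℝ (Fin (n ℓ)))
    (hΦ1 : ∀ z, Φ 1 z = A 0 z + b 0)
    (hΦ : ∀ ℓ, 1 ≤ ℓ → ∀ z, Φ (ℓ+1) z = A ℓ (WithLp.toLp 2 (fun i => ρ (Φ ℓ z i))) + b ℓ)
    (hΦt1 : ∀ z, Φt 1 z = A 0 z + b 0)
    (hΦt : ∀ ℓ, 1 ≤ ℓ → ∀ z, Φt (ℓ+1) z = A ℓ (WithLp.toLp 2 (fun i => ρt (Φt ℓ z i))) + b ℓ) :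
    ∀ z, ‖Φ L z - Φt L z‖ ≤
      δ * Real.sqrt (((Finset.range (L+1)).sup n : ℕ) : ℝ) * ‖A (L-1)‖ *
        ∑ j ∈ Finset.range (L-1),
          (C : ℝ) ^ j * ∏ i ∈ Finset.range j, ‖A (L-2-i)‖ := by
  intro z
  have hδ : 0 ≤ δ := (abs_nonneg _).trans (hclose 0)
  refine le_mul_errorGain_of_le_mul_add (e := fun ℓ => ‖Φ ℓ z - Φt ℓ z‖) (a := fun ℓ => ‖A ℓ‖)
    C.coe_nonneg (fun _ => norm_nonneg _) (by simp [hΦ1, hΦt1]) (fun ℓ hℓ hℓL => ?_) L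
    (by omega) le_rfl
  have hwidth : √(n ℓ : ℝ) ≤ √((range (L + 1)).sup n : ℕ) :=
    Real.sqrt_le_sqrt (by exact_mod_cast le_sup (mem_range.2 (by omega)))
  calc ‖Φ (ℓ + 1) z - Φt (ℓ + 1) z‖
      = ‖A ℓ ((WithLp.toLp 2 fun i => ρ (Φ ℓ z i)) - WithLp.toLp 2 fun i => ρt (Φt ℓ z i))‖ := by
        rw [hΦ ℓ hℓ, hΦt ℓ hℓ, add_sub_add_right_eq_sub, map_sub]
    _ ≤ ‖A ℓ‖ * (δ * √(n ℓ : ℝ) + C * ‖Φ ℓ z - Φt ℓ z‖) := by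
        refine (A ℓ).le_opNorm_of_le ?_
        simpa using EuclideanSpace.norm_toLp_comp_sub_toLp_comp_le hclose hLip (Φ ℓ z) (Φt ℓ z)
    _ ≤ ‖A ℓ‖ * (δ * √((range (L + 1)).sup n : ℕ) + C * ‖Φ ℓ z - Φt ℓ z‖) := by
        gcongr

theorem stmt8 {C : ℝ≥0} (ρ ρt : ℝ → ℝ) {δ : ℝ} (hδ : 0 ≤ δ)
    (hclose : ∀ x, |ρ x - ρt x| ≤ δ) (hLip : LipschitzWith C ρt)
    (L : ℕ) (hL : 2 ≤ L) (n : ℕ → ℕ) (hn0 : n 0 = 2) (hnL : n L = 2)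
    (A : ∀ ℓ : ℕ, EuclideanSpace ℝ (Fin (n ℓ)) →L[ℝ] EuclideanSpace ℝ (Fin (n (ℓ+1))))
    (b : ∀ ℓ : ℕ, EuclideanSpace ℝ (Fin (n (ℓ+1))))
    (Φ Φt : ∀ ℓ : ℕ, EuclideanSpace ℝ (Fin (n 0)) → EuclideanSpace ℝ (Fin (n ℓ)))
    (hΦ1 : ∀ z, Φ 1 z = A 0 z + b 0)
    (hΦ : ∀ ℓ, 1 ≤ ℓ → ∀ z, Φ (ℓ+1) z = A ℓ (WithLp.toLp 2 (fun i => ρ (Φ ℓ z i))) + b ℓ)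
    (hΦt1 : ∀ z, Φt 1 z = A 0 z + b 0)
    (hΦt : ∀ ℓ, 1 ≤ ℓ → ∀ z, Φt (ℓ+1) z = A ℓ (WithLp.toLp 2 (fun i => ρt (Φt ℓ z i))) + b ℓ) :
    ∀ z, ‖Φ L z - Φt L z‖ ≤
      δ * Real.sqrt (((Finset.range (L+1)).sup n : ℕ) : ℝ) * ‖A (L-1)‖ *
        ∑ j ∈ Finset.range (L-1),
          (C : ℝ) ^ j * ∏ i ∈ Finset.range j, ‖A (L-2-i)‖ :=
  stmt8_general ρ ρt hclose hLip L hL n A b Φ Φt hΦ1 hΦ hΦt1 hΦt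
end

section
/- Let ρ : ℝ → ℝ be differentiable with ρ'_min ≤ ρ'(x) ≤ ρ'_max for all x and 0 ≤ ρ'_min. For a network Φ_L with weights A_ℓ as above, each entry of the Jacobian satisfies (∇_z Φ_L(z))_{ij} ∈ Σ_{k_1,…,k_{L-1}} (A_L)_{i k_1} (∏_{ℓ=1}^{L-1} (A_ℓ)_{k_ℓ k_{ℓ+1}}) · [ (ρ'_min)^{L-1}, (ρ'_max)^{L-1} ], where for a ∈ ℝ and an interval [r⁻, r⁺], a·[r⁻,r⁺] := [min(ar⁻,ar⁺), max(ar⁻,ar⁺)], and the sum of intervals is the Minkowski sum (with k_L := j). -/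
/-! By the chain rule, the Jacobian of `Φ (ℓ+1)` is `A ℓ ∘ diag ρ'(Φ ℓ) ∘ ⋯ ∘ diag ρ'(Φ 1) ∘ A 0`.
Expanding this product entrywise gives a sum over paths of neurons, one per layer, of the product
of the weights along the path times the product of the activation slopes along it; the latter is a
product of `Lm` numbers in `[rmin, rmax]` with `0 ≤ rmin`, hence lies in `[rmin ^ Lm, rmax ^ Lm]`. -/

open scoped BigOperators

theorem EuclideanSpace.clm_apply_eq_sum_single {ι κ : Type*} [Fintype ι] [DecidableEq ι]
    (B : EuclideanSpace ℝ ι →L[ℝ] EuclideanSpace ℝ κ) (x : EuclideanSpace ℝ ι) (i : κ) :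
    B x i = ∑ m, x m * B (EuclideanSpace.single m 1) i := by
  conv_lhs => rw [← (EuclideanSpace.basisFun ι ℝ).sum_repr x]
  simp [map_sum, EuclideanSpace.basisFun_apply]

theorem HasFDerivAt.coordwise_comp {E : Type*} [NormedAddCommGroup E] [NormedSpace ℝ E]
    {ι : Type*} [Fintype ι] {ρ : ℝ → ℝ} (hρ : Differentiable ℝ ρ)
    {g : E → EuclideanSpace ℝ ι} {D : E →L[ℝ] EuclideanSpace ℝ ι} {z : E}
    (hg : HasFDerivAt g D z) :
    ∃ D' : E →L[ℝ] EuclideanSpace ℝ ι,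
      HasFDerivAt (fun w => WithLp.toLp 2 (fun i => ρ (g w i))) D' z ∧
        ∀ v i, D' v i = deriv ρ (g z i) * D v i := by
  have hcoord : HasFDerivAt (fun w i => ρ (g w i))
      (ContinuousLinearMap.pi fun i => deriv ρ (g z i) • (EuclideanSpace.proj i).comp D) z :=
    hasFDerivAt_pi.2 fun i =>
      (hρ (g z i)).hasDerivAt.comp_hasFDerivAt z
        ((EuclideanSpace.proj i : EuclideanSpace ℝ ι →L[ℝ] ℝ).hasFDerivAt.comp z hg)
  exact ⟨_, (PiLp.continuousLinearEquiv 2 ℝ fun _ : ι => ℝ).symm.hasFDerivAt.comp z hcoord,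
    fun v i => rfl⟩

theorem prod_mem_Icc_pow {ι : Type*} (s : Finset ι) {f : ι → ℝ} {a b : ℝ} (ha : 0 ≤ a)
    (hf : ∀ i ∈ s, f i ∈ Set.Icc a b) : ∏ i ∈ s, f i ∈ Set.Icc (a ^ s.card) (b ^ s.card) := by
  rw [← Finset.prod_const, ← Finset.prod_const]
  exact ⟨Finset.prod_le_prod (fun _ _ => ha) fun i hi => (hf i hi).1,
    Finset.prod_le_prod (fun i hi => ha.trans (hf i hi).1) fun i hi => (hf i hi).2⟩

namespace NeuralNetwork

variable {n : ℕ → ℕ}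
  (A : ∀ ℓ : ℕ, EuclideanSpace ℝ (Fin (n ℓ)) →L[ℝ] EuclideanSpace ℝ (Fin (n (ℓ+1))))
  (s : ∀ ℓ : ℕ, Fin (n ℓ) → ℝ)

/-- `k t` is the neuron visited in layer `t`, and `s ℓ m` the activation slope at neuron `m` of
layer `ℓ`. -/
noncomputable def pathSum (ℓ : ℕ) (i : Fin (n (ℓ+1))) (j : Fin (n 0)) : ℝ :=
  ∑ k : (∀ m : Fin (ℓ+1), Fin (n m.val)),
    if k ⟨0, Nat.succ_pos ℓ⟩ = j then
      A ℓ (EuclideanSpace.single (k (Fin.last ℓ)) 1) i *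
        (∏ t : Fin ℓ, A t.val (EuclideanSpace.single (k t.castSucc) 1) (k t.succ)) *
        ∏ t : Fin ℓ, s (t.val+1) (k t.succ)
    else 0

theorem pathSum_zero (i : Fin (n 1)) (j : Fin (n 0)) :
    pathSum A s 0 i j = A 0 (EuclideanSpace.single j 1) i := by
  rw [pathSum, ← (Equiv.piUnique fun m : Fin 1 => Fin (n m.val)).symm.sum_comp]
  simp only [Finset.univ_eq_empty, Finset.prod_empty, mul_one]
  exact Fintype.sum_ite_eq' j fun x => A 0 (EuclideanSpace.single x 1) i

theorem pathSum_succ (ℓ : ℕ) (i : Fin (n (ℓ+2))) (j : Fin (n 0)) :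
    pathSum A s (ℓ+1) i j =
      ∑ m, s (ℓ+1) m * pathSum A s ℓ m j * A (ℓ+1) (EuclideanSpace.single m 1) i := by
  rw [pathSum, ← (Fin.snocEquiv fun t : Fin (ℓ+2) => Fin (n t.val)).sum_comp,
    Fintype.sum_prod_type]
  refine Finset.sum_congr rfl fun m _ => ?_
  rw [pathSum, Finset.mul_sum, Finset.sum_mul]
  refine Finset.sum_congr rfl fun k _ => ?_
  simp only [Fin.snocEquiv_apply]
  -- `Fin.snoc_castSucc` and `Fin.snoc_last` restated at the (defeq) index shapes that
  -- `Fin.prod_univ_castSucc` produces, since the dependent `snoc` blocks rewriting the index.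
  set p : ∀ t : Fin (ℓ+2), Fin (n t.val) := Fin.snoc k m
  have p_castSucc (t : Fin (ℓ+1)) : p t.castSucc = k t := Fin.snoc_castSucc ..
  have p_castSucc_succ (t : Fin ℓ) : p t.castSucc.succ = k t.succ := p_castSucc t.succ
  have p_zero : p ⟨0, Nat.succ_pos _⟩ = k ⟨0, Nat.succ_pos _⟩ := p_castSucc 0
  have p_last : p (Fin.last (ℓ+1)) = m := Fin.snoc_last ..
  have p_succ_last : p (Fin.last ℓ).succ = m := p_last
  simp only [Fin.prod_univ_castSucc, p_castSucc, p_castSucc_succ, p_zero, p_last, p_succ_last,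
    Fin.val_castSucc, Fin.val_last]
  split_ifs <;> ring

theorem hasFDerivAt_pathSum (ρ : ℝ → ℝ) (hρ : Differentiable ℝ ρ)
    (b : ∀ ℓ : ℕ, EuclideanSpace ℝ (Fin (n (ℓ+1))))
    (Φ : ∀ ℓ : ℕ, EuclideanSpace ℝ (Fin (n 0)) → EuclideanSpace ℝ (Fin (n ℓ)))
    (hΦ1 : ∀ z, Φ 1 z = A 0 z + b 0)
    (hΦ : ∀ ℓ, 1 ≤ ℓ → ∀ z, Φ (ℓ+1) z = A ℓ (WithLp.toLp 2 (fun i => ρ (Φ ℓ z i))) + b ℓ)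
    (z : EuclideanSpace ℝ (Fin (n 0))) (ℓ : ℕ) :
    ∃ D : EuclideanSpace ℝ (Fin (n 0)) →L[ℝ] EuclideanSpace ℝ (Fin (n (ℓ+1))),
      HasFDerivAt (Φ (ℓ+1)) D z ∧ ∀ i j,
        D (EuclideanSpace.single j 1) i = pathSum A (fun ℓ m => deriv ρ (Φ ℓ z m)) ℓ i j := by
  induction ℓ with
  | zero =>
    refine ⟨A 0, ?_, fun i j => (pathSum_zero ..).symm⟩
    rw [show Φ 1 = fun w => A 0 w + b 0 from funext hΦ1]
    exact (A 0).hasFDerivAt.add_const (b 0)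
  | succ ℓ ih =>
    obtain ⟨D, hD, hentry⟩ := ih
    obtain ⟨D', hD', hD'_apply⟩ := hD.coordwise_comp hρ
    refine ⟨(A (ℓ+1)).comp D', ?_, fun i j => ?_⟩
    · rw [show Φ (ℓ+2) = _ from funext (hΦ (ℓ+1) (Nat.le_add_left 1 ℓ))]
      exact ((A (ℓ+1)).hasFDerivAt.comp z hD').add_const (b (ℓ+1))
    · rw [ContinuousLinearMap.comp_apply, EuclideanSpace.clm_apply_eq_sum_single, pathSum_succ]
      exact Finset.sum_congr rfl fun m _ => by rw [hD'_apply, hentry]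

end NeuralNetwork

theorem stmt13_general (ρ : ℝ → ℝ) (hρ : Differentiable ℝ ρ)
    (rmin rmax : ℝ) (hrmin : 0 ≤ rmin)
    (hbound : ∀ x, deriv ρ x ∈ Set.Icc rmin rmax)
    (Lm : ℕ) (n : ℕ → ℕ)
    (A : ∀ ℓ : ℕ, EuclideanSpace ℝ (Fin (n ℓ)) →L[ℝ] EuclideanSpace ℝ (Fin (n (ℓ+1))))
    (b : ∀ ℓ : ℕ, EuclideanSpace ℝ (Fin (n (ℓ+1))))
    (Φ : ∀ ℓ : ℕ, EuclideanSpace ℝ (Fin (n 0)) → EuclideanSpace ℝ (Fin (n ℓ)))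
    (hΦ1 : ∀ z, Φ 1 z = A 0 z + b 0)
    (hΦ : ∀ ℓ, 1 ≤ ℓ → ∀ z, Φ (ℓ+1) z = A ℓ (WithLp.toLp 2 (fun i => ρ (Φ ℓ z i))) + b ℓ)
    (Dz : ∀ _ : EuclideanSpace ℝ (Fin (n 0)),
      EuclideanSpace ℝ (Fin (n 0)) →L[ℝ] EuclideanSpace ℝ (Fin (n (Lm+1))))
    (hder : ∀ z, HasFDerivAt (Φ (Lm+1)) (Dz z) z) :
    ∀ (z : EuclideanSpace ℝ (Fin (n 0))) (i : Fin (n (Lm+1))) (j : Fin (n 0)),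
      ∃ θ : (∀ ℓ : Fin (Lm+1), Fin (n ℓ.val)) → ℝ,
        (∀ k, θ k ∈ Set.Icc (rmin ^ Lm) (rmax ^ Lm)) ∧
        Dz z (EuclideanSpace.single j 1) i =
          ∑ k : (∀ ℓ : Fin (Lm+1), Fin (n ℓ.val)),
            (if k ⟨0, Nat.succ_pos Lm⟩ = j then
              (A Lm (EuclideanSpace.single (k (Fin.last Lm)) 1) i) *
                (∏ ℓ : Fin Lm,
                  A ℓ.val (EuclideanSpace.single (k ℓ.castSucc) 1) (k ℓ.succ)) * θ k
            else 0) := by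
  intro z i j
  obtain ⟨D, hD, hentry⟩ := NeuralNetwork.hasFDerivAt_pathSum A ρ hρ b Φ hΦ1 hΦ z Lm
  refine ⟨fun k => ∏ t : Fin Lm, deriv ρ (Φ (t.val+1) z (k t.succ)), fun k => ?_, ?_⟩
  · simpa using prod_mem_Icc_pow Finset.univ hrmin
      fun (t : Fin Lm) _ => hbound (Φ (t.val+1) z (k t.succ))
  · rw [(hder z).unique hD, hentry i j]
    rfl

theorem stmt13 (ρ : ℝ → ℝ) (hρ : Differentiable ℝ ρ)
    (rmin rmax : ℝ) (hrmin : 0 ≤ rmin)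
    (hbound : ∀ x, deriv ρ x ∈ Set.Icc rmin rmax)
    (Lm : ℕ) (hLm : 1 ≤ Lm) (n : ℕ → ℕ)
    (A : ∀ ℓ : ℕ, EuclideanSpace ℝ (Fin (n ℓ)) →L[ℝ] EuclideanSpace ℝ (Fin (n (ℓ+1))))
    (b : ∀ ℓ : ℕ, EuclideanSpace ℝ (Fin (n (ℓ+1))))
    (Φ : ∀ ℓ : ℕ, EuclideanSpace ℝ (Fin (n 0)) → EuclideanSpace ℝ (Fin (n ℓ)))
    (hΦ1 : ∀ z, Φ 1 z = A 0 z + b 0)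
    (hΦ : ∀ ℓ, 1 ≤ ℓ → ∀ z, Φ (ℓ+1) z = A ℓ (WithLp.toLp 2 (fun i => ρ (Φ ℓ z i))) + b ℓ)
    (Dz : ∀ _ : EuclideanSpace ℝ (Fin (n 0)),
      EuclideanSpace ℝ (Fin (n 0)) →L[ℝ] EuclideanSpace ℝ (Fin (n (Lm+1))))
    (hder : ∀ z, HasFDerivAt (Φ (Lm+1)) (Dz z) z) :
    ∀ (z : EuclideanSpace ℝ (Fin (n 0))) (i : Fin (n (Lm+1))) (j : Fin (n 0)),
      ∃ θ : (∀ ℓ : Fin (Lm+1), Fin (n ℓ.val)) → ℝ,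
        (∀ k, θ k ∈ Set.Icc (rmin ^ Lm) (rmax ^ Lm)) ∧
        Dz z (EuclideanSpace.single j 1) i =
          ∑ k : (∀ ℓ : Fin (Lm+1), Fin (n ℓ.val)),
            (if k ⟨0, Nat.succ_pos Lm⟩ = j then
              (A Lm (EuclideanSpace.single (k (Fin.last Lm)) 1) i) *
                (∏ ℓ : Fin Lm,
                  A ℓ.val (EuclideanSpace.single (k ℓ.castSucc) 1) (k ℓ.succ)) * θ k
            else 0) :=
  stmt13_general ρ hρ rmin rmax hrmin hbound Lm n A b Φ hΦ1 hΦ Dz hder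
end
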